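/- Let d ≥ 2 be an integer and let X be a β-set of size s and rank n which is a d-core. For a β-set W of rank n_W, define Num(W) = (∏_{i=1}^{n_W}(q^i − 1))·(∏_{w > w' in W}(q^w − q^{w'})) and Den(W) = ∏_{w∈W} ∏_{j=1}^{w}(q^j − 1), polynomials in ℚ[q]. Let x₀ ∈ X with x₀ + d ∉ X, and set X_μ = (X \ {x₀}) ∪ {x₀ + d}, a β-set of rank n + d. Then B_d(Num(X_μ)) − B_d(Den(X_μ)) − B_d(Num(X)) + B_d(Den(X)) = d·( 2·(n − x₀ + #{x ∈ X : x < x₀}) + #{x ∈ X : x > x₀ and x + d ∉ X} ). -/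

import Mathlib

open Polynomial

/-- `φ_d(r)`: for `r = 1` it is `1/2`; for `r ≥ 2` it is the number of integers `j` with
`1 ≤ j ≤ r / d` that are coprime to `r`. -/
noncomputable def phiD (d r : ℕ) : ℚ :=
  if r = 1 then 1 / 2
  else (((Finset.Icc 1 (r / d)).filter fun j => Nat.gcd j r = 1).card : ℚ)

/-- `B_d(f)` for `f` a rational constant times a power of `q` times a product of cyclotomic
polynomials: if `f = c·q^a·∏_{r≥1} Φ_r^{m_r}`, then `B_d(f) = 2a + Σ_r m_r·(φ(r) + d·φ_d(r))`.
The exponents are recovered as multiplicities; since `Φ_r ∣ f` forces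
`φ(r) ≤ deg f` and `r ≤ 2·φ(r)²`, the sum below captures every relevant `r`. -/
noncomputable def Bd (d : ℕ) (f : Polynomial ℚ) : ℚ :=
  2 * (multiplicity X f : ℚ) +
    ∑ r ∈ Finset.Icc 1 (2 * f.natDegree ^ 2 + 1),
      (multiplicity (cyclotomic r ℚ) f : ℚ) * ((Nat.totient r : ℚ) + d * phiD d r)

/-- The rank of a β-set `S` of size `s`: `(Σ_{x∈S} x) − s(s−1)/2`. -/
def brank (S : Finset ℕ) : ℕ := (∑ x ∈ S, x) - S.card * (S.card - 1) / 2

/-- A β-set is an `e`-core if `x − e ∈ S` for every `x ∈ S` with `x ≥ e`. -/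
def IsCore (e : ℕ) (S : Finset ℕ) : Prop := ∀ x ∈ S, e ≤ x → x - e ∈ S

/-- `Num(W) = (∏_{i=1}^{rank W}(q^i − 1))·(∏_{w > w' in W}(q^w − q^{w'}))`. -/
noncomputable def NumGL (S : Finset ℕ) : Polynomial ℚ :=
  (∏ i ∈ Finset.Icc 1 (brank S), (X ^ i - 1)) *
    ∏ w ∈ S, ∏ w' ∈ S.filter (· < w), (X ^ w - X ^ w')

/-- `Den(W) = ∏_{w∈W} ∏_{j=1}^{w}(q^j − 1)`. -/
noncomputable def DenGL (S : Finset ℕ) : Polynomial ℚ :=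
  ∏ w ∈ S, ∏ j ∈ Finset.Icc 1 w, (X ^ j - 1)

/-!
Every polynomial here has the form `q^a · ∏ (q^m - 1)`, and `q^m - 1 = ∏_{r ∣ m} Φ_r`. Since
`Σ_{r ∣ m} φ(r) = m` and `Σ_{r ∣ m} φ_d(r) = 1/2 + ⌊m/d⌋` (group the `k ≤ m/d` by `gcd(k, m)`), `B_d`
adds up over such a product, each factor `q^m - 1` contributing `m + d/2 + d⌊m/d⌋`, a quantity
that grows by exactly `2d` when `m` grows by `d`.

Moving `x₀` to `x₀ + d` raises the rank by `d`, and changes the contribution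
`2 min(y, x₀) + B_d(q^|y - x₀| - 1)` of each pair `{y, x₀}` by `2d` if `y < x₀`, by `d` if
`x₀ < y < x₀ + d`, and not at all if `y > x₀ + d`. Finally, in a `d`-core, `y ↦ y + d` matches the
`y > x₀` with `y + d ∈ S` with the elements above `x₀ + d`, so there are as many elements of `S`
strictly between `x₀` and `x₀ + d` as there are `y > x₀` with `y + d ∉ S`.
-/

open Finset

lemma card_filter_gcd_mul_eq_left {d e r : ℕ} (hd : 0 < d) (he : 0 < e) :
    #{k ∈ Icc 1 (e * r / d) | k.gcd (e * r) = e} = #{j ∈ Icc 1 (r / d) | j.gcd r = 1} := by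
  have hle (j : ℕ) : e * j ≤ e * r / d ↔ j ≤ r / d := by
    rw [Nat.le_div_iff_mul_le hd, Nat.le_div_iff_mul_le hd, mul_assoc,
      Nat.mul_le_mul_left_iff he]
  have hgcd (j : ℕ) : (e * j).gcd (e * r) = e ↔ j.gcd r = 1 := by
    rw [Nat.gcd_mul_left, Nat.mul_eq_left he.ne']
  symm
  apply card_bij (fun j _ => e * j)
  · intro j hj
    simp only [mem_filter, mem_Icc] at hj ⊢
    exact ⟨⟨Nat.mul_pos he hj.1.1, (hle j).2 hj.1.2⟩, (hgcd j).2 hj.2⟩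
  · intro j _ j' _ h
    exact Nat.eq_of_mul_eq_mul_left he h
  · intro k hk
    simp only [mem_filter, mem_Icc] at hk
    obtain ⟨j, rfl⟩ : e ∣ k := hk.2 ▸ Nat.gcd_dvd_left k (e * r)
    refine ⟨j, ?_, rfl⟩
    simp only [mem_filter, mem_Icc]
    exact ⟨⟨Nat.one_le_iff_ne_zero.2 (by rintro rfl; simp at hk), (hle j).1 hk.1.2⟩,
      (hgcd j).1 hk.2⟩

lemma sum_divisors_card_filter_gcd_eq_one {d m : ℕ} (hd : 0 < d) (hm : m ≠ 0) :
    ∑ r ∈ m.divisors, #{j ∈ Icc 1 (r / d) | j.gcd r = 1} = m / d := by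
  rw [← Nat.sum_div_divisors]
  calc ∑ e ∈ m.divisors, #{j ∈ Icc 1 (m / e / d) | j.gcd (m / e) = 1}
      = ∑ e ∈ m.divisors, #{k ∈ Icc 1 (m / d) | k.gcd m = e} := by
        refine sum_congr rfl fun e he => ?_
        have hem : e * (m / e) = m := Nat.mul_div_cancel' (Nat.dvd_of_mem_divisors he)
        rw [← card_filter_gcd_mul_eq_left hd (Nat.pos_of_mem_divisors he), hem]
    _ = #(Icc 1 (m / d)) := by
        refine (card_eq_sum_card_fiberwise fun k _ => ?_).symm
        exact Nat.mem_divisors.2 ⟨Nat.gcd_dvd_right k m, hm⟩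
    _ = m / d := by simp

lemma sum_divisors_phiD {d m : ℕ} (hd : 2 ≤ d) (hm : m ≠ 0) :
    ∑ r ∈ m.divisors, phiD d r = 1 / 2 + (m / d : ℕ) := by
  have hphiD (r : ℕ) :
      phiD d r = (if r = 1 then 1 / 2 else 0) + #{j ∈ Icc 1 (r / d) | j.gcd r = 1} := by
    rcases eq_or_ne r 1 with rfl | hr
    · simp [phiD, Nat.div_eq_of_lt (show 1 < d by omega)]
    · simp [phiD, hr]
  simp_rw [hphiD, sum_add_distrib, sum_ite_eq', Nat.mem_divisors, Nat.one_dvd, ne_eq, hm,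
    not_false_eq_true, and_self, if_true]
  rw [← Nat.cast_sum, sum_divisors_card_filter_gcd_eq_one (by omega) hm]

lemma not_X_dvd_X_pow_sub_one {m : ℕ} (hm : m ≠ 0) : ¬ (X : ℚ[X]) ∣ X ^ m - 1 := by
  simp [X_dvd_iff, coeff_X_pow, hm.symm]

lemma cyclotomic_eq_of_dvd {r s : ℕ} (hr : 0 < r) (hs : 0 < s)
    (h : cyclotomic r ℚ ∣ cyclotomic s ℚ) : r = s :=
  cyclotomic_injective <|
    eq_of_monic_of_associated (cyclotomic.monic r ℚ) (cyclotomic.monic s ℚ) <|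
      (cyclotomic.irreducible_rat hr).associated_of_dvd (cyclotomic.irreducible_rat hs) h

lemma not_cyclotomic_dvd_X_pow {r : ℕ} (hr : 0 < r) (a : ℕ) :
    ¬ cyclotomic r ℚ ∣ (X : ℚ[X]) ^ a := by
  intro h
  have hX : Associated (cyclotomic r ℚ) X := (cyclotomic.irreducible_rat hr).associated_of_dvd
    irreducible_X ((cyclotomic.irreducible_rat hr).prime.dvd_of_dvd_pow h)
  exact not_X_dvd_X_pow_sub_one hr.ne' ((hX.symm.dvd).trans (cyclotomic.dvd_X_pow_sub_one r ℚ))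

lemma emultiplicity_cyclotomic_X_pow_sub_one {r m : ℕ} (hr : 0 < r) (hm : 0 < m) :
    emultiplicity (cyclotomic r ℚ) ((X : ℚ[X]) ^ m - 1) = if r ∣ m then 1 else 0 := by
  have hprime := (cyclotomic.irreducible_rat hr).prime
  have hcyc : ∀ s ∈ m.divisors,
      emultiplicity (cyclotomic r ℚ) (cyclotomic s ℚ) = if s = r then 1 else 0 := by
    intro s hs
    split_ifs with h
    · subst h
      exact (FiniteMultiplicity.of_prime_left hprime (cyclotomic_ne_zero s ℚ)).emultiplicity_self
    · exact emultiplicity_eq_zero.2 fun hdvd =>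
        h (cyclotomic_eq_of_dvd hr (Nat.pos_of_mem_divisors hs) hdvd).symm
  rw [← prod_cyclotomic_eq_X_pow_sub_one hm, Finset.emultiplicity_prod hprime,
    sum_congr rfl hcyc, sum_ite_eq']
  simp [Nat.mem_divisors, hm.ne']

section ProdForm

variable {ι : Type*} (a : ℕ) (I : Finset ι) {m : ι → ℕ}

lemma multiplicity_X_X_pow_mul_prod (hm : ∀ i ∈ I, m i ≠ 0) :
    multiplicity (X : ℚ[X]) (X ^ a * ∏ i ∈ I, (X ^ m i - 1)) = a := by
  apply multiplicity_eq_of_emultiplicity_eq_some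
  rw [emultiplicity_mul prime_X, Finset.emultiplicity_prod prime_X,
    sum_eq_zero fun i hi => emultiplicity_eq_zero.2 (not_X_dvd_X_pow_sub_one (hm i hi)), add_zero,
    emultiplicity_pow_self_of_prime prime_X]

lemma multiplicity_cyclotomic_X_pow_mul_prod {r : ℕ} (hr : 0 < r) (hm : ∀ i ∈ I, m i ≠ 0) :
    multiplicity (cyclotomic r ℚ) (X ^ a * ∏ i ∈ I, (X ^ m i - 1)) = #{i ∈ I | r ∣ m i} := by
  have hprime := (cyclotomic.irreducible_rat hr).prime
  apply multiplicity_eq_of_emultiplicity_eq_some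
  rw [emultiplicity_mul hprime, Finset.emultiplicity_prod hprime,
    emultiplicity_eq_zero.2 (not_cyclotomic_dvd_X_pow hr a), zero_add,
    sum_congr rfl fun i hi =>
      emultiplicity_cyclotomic_X_pow_sub_one hr (Nat.pos_of_ne_zero (hm i hi)), card_filter]
  push_cast
  exact sum_congr rfl fun i _ => by split_ifs <;> simp

end ProdForm

/-- `B_d(q^m - 1)` for `m ≥ 1` (see `sum_divisors_totient_add_phiD`). -/
noncomputable def bdXPowSubOne (d m : ℕ) : ℚ := m + d / 2 + d * (m / d : ℕ)

lemma sum_divisors_totient_add_phiD {d m : ℕ} (hd : 2 ≤ d) (hm : m ≠ 0) :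
    ∑ r ∈ m.divisors, ((r.totient : ℚ) + d * phiD d r) = bdXPowSubOne d m := by
  rw [sum_add_distrib, ← mul_sum, sum_divisors_phiD hd hm, ← Nat.cast_sum, Nat.sum_totient,
    bdXPowSubOne]
  ring

lemma natDegree_X_pow_sub_one_le_of_dvd {f : ℚ[X]} {m : ℕ} (hf : f ≠ 0)
    (h : X ^ m - 1 ∣ f) : m ≤ f.natDegree := by
  have hdeg := natDegree_le_of_dvd h hf
  rwa [← C_1, natDegree_X_pow_sub_C] at hdeg

theorem Bd_X_pow_mul_prod {d : ℕ} (hd : 2 ≤ d) {ι : Type*} (a : ℕ) (I : Finset ι) {m : ι → ℕ}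
    (hm : ∀ i ∈ I, m i ≠ 0) :
    Bd d (X ^ a * ∏ i ∈ I, (X ^ m i - 1)) = 2 * a + ∑ i ∈ I, bdXPowSubOne d (m i) := by
  set f : ℚ[X] := X ^ a * ∏ i ∈ I, (X ^ m i - 1)
  have hf : f ≠ 0 := mul_ne_zero (pow_ne_zero a X_ne_zero) <| prod_ne_zero_iff.2 fun i hi => by
    simpa using X_pow_sub_C_ne_zero (Nat.pos_of_ne_zero (hm i hi)) (1 : ℚ)
  set N := 2 * f.natDegree ^ 2 + 1
  have hdivisors : ∀ i ∈ I, {r ∈ Icc 1 N | r ∣ m i} = (m i).divisors := by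
    intro i hi
    have hle : m i ≤ f.natDegree :=
      natDegree_X_pow_sub_one_le_of_dvd hf ((dvd_prod_of_mem _ hi).mul_left _)
    ext r
    simp only [mem_filter, mem_Icc, Nat.mem_divisors, hm i hi, ne_eq, not_false_eq_true, and_true,
      and_iff_right_iff_imp]
    intro hr
    have hrm := Nat.le_of_dvd (Nat.pos_of_ne_zero (hm i hi)) hr
    exact ⟨Nat.pos_of_dvd_of_pos hr (Nat.pos_of_ne_zero (hm i hi)),
      show r ≤ 2 * _ ^ 2 + 1 by nlinarith⟩
  rw [Bd, multiplicity_X_X_pow_mul_prod a I hm]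
  congr 1
  calc ∑ r ∈ Icc 1 N, (multiplicity (cyclotomic r ℚ) f : ℚ) * ((r.totient : ℚ) + d * phiD d r)
      = ∑ r ∈ Icc 1 N, ∑ i ∈ I, if r ∣ m i then (r.totient : ℚ) + d * phiD d r else 0 := by
        refine sum_congr rfl fun r hr => ?_
        rw [multiplicity_cyclotomic_X_pow_mul_prod a I (mem_Icc.1 hr).1 hm, card_filter,
          Nat.cast_sum, sum_mul]
        exact sum_congr rfl fun i _ => by split_ifs <;> simp
    _ = ∑ i ∈ I, ∑ r ∈ (m i).divisors, ((r.totient : ℚ) + d * phiD d r) := by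
        rw [sum_comm]
        exact sum_congr rfl fun i hi => by rw [← sum_filter, hdivisors i hi]
    _ = ∑ i ∈ I, bdXPowSubOne d (m i) :=
        sum_congr rfl fun i hi => sum_divisors_totient_add_phiD hd (hm i hi)

lemma bdXPowSubOne_add {d : ℕ} (hd : 0 < d) (m : ℕ) :
    bdXPowSubOne d (m + d) = bdXPowSubOne d m + 2 * d := by
  rw [bdXPowSubOne, bdXPowSubOne, Nat.add_div_right m hd]
  push_cast
  ring

lemma bdXPowSubOne_of_lt {d m : ℕ} (hm : m < d) : bdXPowSubOne d m = m + d / 2 := by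
  simp [bdXPowSubOne, Nat.div_eq_of_lt hm]

lemma sum_Icc_bdXPowSubOne_add {d : ℕ} (hd : 0 < d) (a : ℕ) :
    ∑ j ∈ Icc 1 (a + d), bdXPowSubOne d j
      = ∑ j ∈ Icc 1 a, bdXPowSubOne d j + ∑ j ∈ Icc 1 d, bdXPowSubOne d j + 2 * d * a := by
  induction a with
  | zero => simp
  | succ a ih =>
    rw [show a + 1 + d = a + d + 1 by omega, sum_Icc_succ_top (by omega), ih,
      sum_Icc_succ_top (by omega), show a + d + 1 = a + 1 + d by omega, bdXPowSubOne_add hd]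
    push_cast
    ring

lemma Bd_DenGL {d : ℕ} (hd : 2 ≤ d) (S : Finset ℕ) :
    Bd d (DenGL S) = ∑ w ∈ S, ∑ j ∈ Icc 1 w, bdXPowSubOne d j := by
  have hDen : DenGL S = X ^ 0 * ∏ p ∈ S.sigma (Icc 1), ((X : ℚ[X]) ^ p.2 - 1) := by
    rw [pow_zero, one_mul, prod_sigma, DenGL]
  have hpos : ∀ p ∈ S.sigma (Icc 1), p.2 ≠ 0 := fun p hp =>
    (Nat.one_le_iff_ne_zero.1 (mem_Icc.1 (mem_sigma.1 hp).2).1)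
  rw [hDen, Bd_X_pow_mul_prod hd 0 _ hpos, sum_sigma]
  simp

/-- `B_d(q^v - q^u) = B_d(q^u (q^(v - u) - 1))` for `u < v`, written symmetrically. -/
noncomputable def pairWeight (d u v : ℕ) : ℚ := 2 * min u v + bdXPowSubOne d (Nat.dist u v)

lemma pairWeight_comm (d u v : ℕ) : pairWeight d u v = pairWeight d v u := by
  rw [pairWeight, pairWeight, min_comm, Nat.dist_comm]

noncomputable def pairSum (d : ℕ) (S : Finset ℕ) : ℚ :=
  ∑ w ∈ S, ∑ w' ∈ S with w' < w, pairWeight d w' w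

lemma Bd_NumGL {d : ℕ} (hd : 2 ≤ d) (S : Finset ℕ) :
    Bd d (NumGL S) = ∑ i ∈ Icc 1 (brank S), bdXPowSubOne d i + pairSum d S := by
  set P := S.sigma fun w => {w' ∈ S | w' < w}
  have hlt : ∀ p ∈ P, p.2 < p.1 := fun p hp => (mem_filter.1 (mem_sigma.1 hp).2).2
  set e : ℕ ⊕ (_ : ℕ) × ℕ → ℕ := Sum.elim id fun p => p.1 - p.2
  have hNum :
      NumGL S = X ^ (∑ p ∈ P, p.2) * ∏ j ∈ (Icc 1 (brank S)).disjSum P, (X ^ e j - 1) := by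
    have hfactor : ∀ p ∈ P, (X : ℚ[X]) ^ p.1 - X ^ p.2 = X ^ p.2 * (X ^ (p.1 - p.2) - 1) :=
      fun p hp => by rw [mul_sub, mul_one, ← pow_add, Nat.add_sub_cancel' (hlt p hp).le]
    rw [NumGL, ← prod_sigma S _ fun p => (X : ℚ[X]) ^ p.1 - X ^ p.2, prod_congr rfl hfactor,
      prod_mul_distrib, prod_pow_eq_pow_sum, prod_disjSum]
    simp only [e, Sum.elim_inl, Sum.elim_inr, id_eq]
    ring
  have hpos : ∀ j ∈ (Icc 1 (brank S)).disjSum P, e j ≠ 0 := by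
    rintro (i | p) hj
    · exact Nat.one_le_iff_ne_zero.1 (mem_Icc.1 (inl_mem_disjSum.1 hj)).1
    · exact Nat.sub_ne_zero_of_lt (hlt p (inr_mem_disjSum.1 hj))
  have hpair : pairSum d S = ∑ p ∈ P, (2 * (p.2 : ℚ) + bdXPowSubOne d (p.1 - p.2)) := by
    rw [pairSum, ← sum_sigma S (fun w => {w' ∈ S | w' < w}) fun p => pairWeight d p.2 p.1]
    refine sum_congr rfl fun p hp => ?_
    rw [pairWeight, min_eq_left (hlt p hp).le, Nat.dist_eq_sub_of_le (hlt p hp).le]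
  rw [hNum, Bd_X_pow_mul_prod hd _ _ hpos, sum_disjSum, hpair, sum_add_distrib, ← mul_sum]
  simp only [e, Sum.elim_inl, Sum.elim_inr, id_eq]
  push_cast
  ring

lemma pairSum_insert {d x : ℕ} {T : Finset ℕ} (hx : x ∉ T) :
    pairSum d (insert x T) = pairSum d T + ∑ y ∈ T, pairWeight d x y := by
  have hinner : ∀ w ∈ T, ∑ w' ∈ insert x T with w' < w, pairWeight d w' w
      = ∑ w' ∈ T with w' < w, pairWeight d w' w + if x < w then pairWeight d x w else 0 := by
    intro w _
    rw [filter_insert]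
    split_ifs
    · rw [sum_insert fun h => hx (mem_filter.1 h).1, add_comm]
    · rw [add_zero]
  have hbelow : {w' ∈ insert x T | w' < x} = {y ∈ T | ¬ x < y} := by
    rw [filter_insert, if_neg (lt_irrefl x)]
    exact filter_congr fun y hy => by
      have hyx : y ≠ x := fun h => hx (h ▸ hy)
      omega
  rw [pairSum, sum_insert hx, sum_congr rfl hinner, sum_add_distrib, ← sum_filter, hbelow,
    sum_congr rfl fun y _ => pairWeight_comm d y x, ← pairSum, add_comm, add_assoc,
    sum_filter_add_sum_filter_not]

lemma pairWeight_add_left {d : ℕ} (hd : 0 < d) {x y : ℕ} (hyx : y ≠ x) (hyxd : y ≠ x + d) :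
    pairWeight d (x + d) y = pairWeight d x y + (if y < x then 2 * (d : ℚ) else 0)
      + (if x < y ∧ y < x + d then (d : ℚ) else 0) := by
  rcases lt_or_gt_of_ne hyx with hlt | hgt
  · have hdist : Nat.dist (x + d) y = Nat.dist x y + d := by unfold Nat.dist; omega
    rw [pairWeight, pairWeight, hdist, bdXPowSubOne_add hd, min_eq_right (by omega),
      min_eq_right hlt.le, if_pos hlt, if_neg (by omega)]
    ring
  · rcases lt_or_gt_of_ne hyxd with hlt' | hgt'
    · rw [pairWeight, pairWeight, bdXPowSubOne_of_lt (show Nat.dist (x + d) y < d by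
        unfold Nat.dist; omega), bdXPowSubOne_of_lt (show Nat.dist x y < d by
        unfold Nat.dist; omega), Nat.dist_eq_sub_of_le_right (by omega),
        Nat.dist_eq_sub_of_le (by omega), min_eq_right (by omega), min_eq_left hgt.le,
        if_neg (by omega), if_pos ⟨hgt, hlt'⟩]
      push_cast [Nat.cast_sub hlt'.le, Nat.cast_sub hgt.le]
      ring
    · have hdist : Nat.dist x y = Nat.dist (x + d) y + d := by unfold Nat.dist; omega
      rw [pairWeight, pairWeight, hdist, bdXPowSubOne_add hd, min_eq_left (by omega),
        min_eq_left hgt.le, if_neg (by omega), if_neg (by omega)]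
      push_cast
      ring

lemma pairSum_addHook {d : ℕ} (hd : 0 < d) {S : Finset ℕ} {x : ℕ} (hx : x ∈ S)
    (hxd : x + d ∉ S) :
    pairSum d (insert (x + d) (S.erase x)) = pairSum d S
      + 2 * d * #{y ∈ S | y < x} + d * #{y ∈ S | x < y ∧ y < x + d} := by
  have hxd' : x + d ∉ S.erase x := fun h => hxd (mem_of_mem_erase h)
  have hS : pairSum d S = pairSum d (S.erase x) + ∑ y ∈ S.erase x, pairWeight d x y := by
    rw [← pairSum_insert (notMem_erase x S), insert_erase hx]
  have hfilter (p : ℕ → Prop) [DecidablePred p] (hp : ¬ p x) :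
      {y ∈ S.erase x | p y} = {y ∈ S | p y} := by
    rw [filter_erase, erase_eq_of_notMem fun h => hp (mem_filter.1 h).2]
  rw [pairSum_insert hxd', hS,
    sum_congr rfl fun y hy => pairWeight_add_left hd (ne_of_mem_erase hy) fun h => hxd' (h ▸ hy),
    sum_add_distrib, sum_add_distrib, ← sum_filter, ← sum_filter,
    sum_const, sum_const, hfilter (· < x) (lt_irrefl x),
    hfilter (fun y => x < y ∧ y < x + d) fun h => lt_irrefl x h.1]
  simp only [nsmul_eq_mul]
  ring

lemma sum_insert_erase_add {M : Type*} [AddCommMonoid M] (f : ℕ → M) {S : Finset ℕ} {x y : ℕ}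
    (hx : x ∈ S) (hy : y ∉ S) :
    ∑ w ∈ insert y (S.erase x), f w + f x = ∑ w ∈ S, f w + f y := by
  rw [sum_insert fun h => hy (mem_of_mem_erase h), add_assoc, add_comm _ (f x),
    add_sum_erase S f hx, add_comm]

lemma card_mul_card_sub_one_le_two_mul_sum (S : Finset ℕ) : #S * (#S - 1) ≤ 2 * ∑ x ∈ S, x := by
  have h := Finset.sum_range_le_sum (s := S.map Nat.castEmbedding) (c := (0 : ℤ)) (by simp)
  simp only [card_map, zero_add, sum_map, Nat.castEmbedding_apply] at h
  rw [← Nat.cast_sum, ← Nat.cast_sum, Nat.cast_le] at h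
  rw [← sum_range_id_mul_two, mul_comm]
  exact Nat.mul_le_mul_left 2 h

lemma brank_addHook {d : ℕ} {S : Finset ℕ} {x : ℕ} (hx : x ∈ S) (hxd : x + d ∉ S) :
    brank (insert (x + d) (S.erase x)) = brank S + d := by
  have hsum := sum_insert_erase_add id hx hxd
  have hcard : #(insert (x + d) (S.erase x)) = #S := by
    rw [card_insert_of_notMem fun h => hxd (mem_of_mem_erase h), card_erase_add_one hx]
  have hle := card_mul_card_sub_one_le_two_mul_sum S
  simp only [id] at hsum
  rw [brank, brank, hcard]
  omega

lemma card_filter_lt_add_notMem {d : ℕ} {S : Finset ℕ} (hS : IsCore d S) {x : ℕ}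
    (hxd : x + d ∉ S) :
    #{y ∈ S | x < y ∧ y + d ∉ S} = #{y ∈ S | x < y ∧ y < x + d} := by
  have hshift : #{y ∈ S | x < y ∧ y + d ∈ S} = #{z ∈ S | x + d < z} := by
    apply card_nbij' (· + d) (· - d)
    · intro y hy
      simp only [coe_filter, Set.mem_ofPred_eq] at hy ⊢
      exact ⟨hy.2.2, by omega⟩
    · intro z hz
      simp only [coe_filter, Set.mem_ofPred_eq] at hz ⊢
      refine ⟨hS z hz.1 (by omega), by omega, ?_⟩
      rw [Nat.sub_add_cancel (by omega)]
      exact hz.1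
    · intro y _
      simp
    · intro z hz
      simp only [coe_filter, Set.mem_ofPred_eq] at hz
      simp only
      omega
  have hsplit_top := card_filter_add_card_filter_not (s := {y ∈ S | x < y}) (fun y => y + d ∉ S)
  have hsplit_window := card_filter_add_card_filter_not (s := {y ∈ S | x < y}) (· < x + d)
  simp only [filter_filter, not_not] at hsplit_top hsplit_window
  have hbeyond : {y ∈ S | x < y ∧ ¬ y < x + d} = {z ∈ S | x + d < z} :=
    filter_congr fun y hy => by
      have hyxd : y ≠ x + d := fun h => hxd (h ▸ hy)
      omega
  rw [hbeyond] at hsplit_window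
  omega

/-- For a `d`-core β-set `S` of rank `n` and an addable position `x₀` (i.e. `x₀ ∈ S`,
`x₀ + d ∉ S`), with `S_μ = (S \ {x₀}) ∪ {x₀ + d}`:
`B_d(Num(S_μ)) − B_d(Den(S_μ)) − B_d(Num(S)) + B_d(Den(S))
  = d·(2·(n − x₀ + #{x ∈ S : x < x₀}) + #{x ∈ S : x > x₀ ∧ x + d ∉ S})`. -/
theorem Bd_addHook_GL (d : ℕ) (hd : 2 ≤ d) (S : Finset ℕ) (hS : IsCore d S)
    (x0 : ℕ) (hx0 : x0 ∈ S) (hx0d : x0 + d ∉ S) :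
    Bd d (NumGL (insert (x0 + d) (S.erase x0))) - Bd d (DenGL (insert (x0 + d) (S.erase x0)))
      - Bd d (NumGL S) + Bd d (DenGL S)
    = d * (2 * ((brank S : ℚ) - (x0 : ℚ) + ((S.filter (· < x0)).card : ℚ))
        + ((S.filter fun x => x0 < x ∧ x + d ∉ S).card : ℚ)) := by
  have hd0 : 0 < d := by omega
  have hDen := sum_insert_erase_add (fun w => ∑ j ∈ Icc 1 w, bdXPowSubOne d j) hx0 hx0d
  have hShift := sum_Icc_bdXPowSubOne_add hd0 x0
  rw [Bd_NumGL hd, Bd_NumGL hd, Bd_DenGL hd, Bd_DenGL hd, brank_addHook hx0 hx0d,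
    sum_Icc_bdXPowSubOne_add hd0, pairSum_addHook hd0 hx0 hx0d,
    card_filter_lt_add_notMem hS hx0d]
  linarith
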